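/- Let n > 2 be an even natural number, and let a, b, c be integers with b² − 1 = n·c (so that b² ≡ 1 mod n). Then the following are equivalent: (i) there exist a group G, an injective group homomorphism ι : D_n → G whose image is a normal subgroup of index 2 in G, and an element q ∈ G with q ∉ ι(D_n), such that q⁻¹ ι(s) q = ι(s^b) and q⁻¹ ι(t) q = ι(s^a t); (ii) a and c are not both odd. -/

import Mathlib

/-- `RealizesConj n a b G` says that `G` contains the dihedral group `D_n`
(embedded via an injective homomorphism `ι`) as a normal subgroup of index 2, and some
element `q` of `G` outside `D_n` conjugates `s = r 1` to `s^b` and `t = sr 0` to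
`s^a t`. -/
def RealizesConj (n : ℕ) (a b : ℤ) (G : Type) [Group G] : Prop :=
  ∃ (ι : DihedralGroup n →* G) (q : G),
    Function.Injective ι ∧ ι.range.Normal ∧ ι.range.index = 2 ∧ q ∉ ι.range ∧
    q⁻¹ * ι (DihedralGroup.r 1) * q = ι (DihedralGroup.r (b : ZMod n)) ∧
    q⁻¹ * ι (DihedralGroup.sr 0) * q = ι (DihedralGroup.sr (a : ZMod n))

namespace DihedralExtAux


open DihedralGroup

lemma r_inv {n : ℕ} (i : ZMod n) : (r i : DihedralGroup n)⁻¹ = r (-i) := rfl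

lemma r_one_zpow (n : ℕ) (z : ℤ) : (r 1 : DihedralGroup n) ^ z = r (z : ZMod n) := by
  cases z with
  | ofNat m => simpa using r_one_pow (n := n) m
  | negSucc m =>
    rw [zpow_negSucc, r_one_pow, r_inv]
    congr 1
    push_cast
    ring

lemma key_arith (n : ℕ) (hn : 2 < n) (hne : Even n) (a b c : ℤ)
    (h : b ^ 2 - 1 = (n : ℤ) * c) :
    (∃ k : ℤ, (n:ℤ) ∣ (a*(1+b) - 2*k) ∧ (n:ℤ) ∣ (k*(b-1))) ↔ ¬(Odd a ∧ Odd c) := by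
  obtain ⟨m, hm⟩ := hne
  have hmz : (n : ℤ) = 2 * m := by rw [hm]; push_cast; ring
  have hm0 : (m : ℤ) ≠ 0 := by
    have : 1 ≤ m := by omega
    exact_mod_cast (by omega : (m:ℤ) ≠ 0)
  have hbodd : Odd b := by
    have h2 : Even ((n:ℤ) * c) := by
      refine Even.mul_right ⟨(m:ℤ), ?_⟩ c
      rw [hmz]; ring
    have h3 : Odd (b ^ 2) := by
      have : b ^ 2 = (n:ℤ) * c + 1 := by linarith
      rw [this]; exact h2.add_one
    rcases Int.odd_pow.mp h3 with h4 | h4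
    · exact h4
    · omega
  obtain ⟨u, hu⟩ := hbodd  -- b = 2*u + 1
  -- b - 1 = 2u, b + 1 = 2(u+1); set v = u + 1
  set v : ℤ := u + 1 with hv
  have huv : 2 * (u * v) = (m : ℤ) * c := by
    have : (2*u) * (2*v) = (n:ℤ) * c := by rw [← h]; ring_nf; rw [hu]; ring
    rw [hmz] at this; linarith [this]
  constructor
  · rintro ⟨k, ⟨d1, hd1⟩, ⟨d2, hd2⟩⟩ ⟨ha, hc⟩
    -- a*(1+b) - 2k = n d1 = 2m d1 ; a(1+b) = 2 a v
    have e1 : 2 * (a * v) - 2 * k = 2 * (m : ℤ) * d1 := by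
      rw [← hmz, ← hd1, hu]; ring
    have e1' : k = a * v - m * d1 := by linarith
    have e2 : k * (2 * u) = 2 * (m:ℤ) * d2 := by
      rw [← hmz, ← hd2, hu]; ring
    have e2' : k * u = (m:ℤ) * d2 := by linarith
    have e3 : (m:ℤ) * (a * c) = (m:ℤ) * (2 * (d2 + u * d1)) := by
      have h5 : (a * v - m * d1) * u = m * d2 := by rw [← e1']; exact e2'
      linear_combination (-a) * huv + 2 * h5
    have e4 : a * c = 2 * (d2 + u * d1) := mul_left_cancel₀ hm0 e3
    have h6 : Even (a * c) := ⟨d2 + u * d1, by rw [e4]; ring⟩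
    exact (Int.not_odd_iff_even.mpr h6) (ha.mul hc)
  · intro hnot
    rcases Int.even_or_odd a with ha | ha
    · obtain ⟨a', ha'⟩ := ha
      refine ⟨a' * (1 + b), ⟨0, by rw [ha']; ring⟩, ⟨a' * c, ?_⟩⟩
      have : (1+b)*(b-1) = (n:ℤ)*c := by rw [← h]; ring
      calc a' * (1 + b) * (b - 1) = a' * ((1+b)*(b-1)) := by ring
        _ = (n:ℤ) * (a' * c) := by rw [this]; ring
    · have hc : Even c := by
        rcases Int.even_or_odd c with hc | hc
        · exact hc
        · exact absurd ⟨ha, hc⟩ hnot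
      obtain ⟨c', hc'⟩ := hc
      refine ⟨a * v, ⟨0, by rw [hu]; ring⟩, ⟨a * c', ?_⟩⟩
      have : v * (b - 1) = v * (2 * u) := by rw [hu]; ring
      calc a * v * (b - 1) = a * (2 * (u * v)) := by rw [hu]; ring
        _ = a * ((m:ℤ) * c) := by rw [huv]
        _ = (n:ℤ) * (a * c') := by rw [hmz, hc']; ring



/-- The endomorphism sending `r i ↦ r (β i)` and `sr i ↦ sr (α + β i)`. -/
def psi (n : ℕ) (α β : ZMod n) : DihedralGroup n →* DihedralGroup n where
  toFun := fun x => match x with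
    | .r i => .r (β * i)
    | .sr i => .sr (α + β * i)
  map_one' := by
    show DihedralGroup.r (β * 0) = 1
    rw [mul_zero, one_def]
  map_mul' := by
    rintro (i | i) (j | j) <;>
      simp only [r_mul_r, r_mul_sr, sr_mul_r, sr_mul_sr] <;> congr 1 <;> ring

@[simp] lemma psi_r (n : ℕ) (α β i : ZMod n) : psi n α β (.r i) = .r (β * i) := rfl
@[simp] lemma psi_sr (n : ℕ) (α β i : ZMod n) : psi n α β (.sr i) = .sr (α + β * i) := rfl

section Construction

variable (n : ℕ) (α β κ : ZMod n)

/-- Carrier of the extension group. -/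
structure QG (n : ℕ) where
  j : ZMod 2
  d : DihedralGroup n

def qmul (x y : QG n) : QG n :=
  ⟨x.j + y.j,
    (if x.j = 1 ∧ y.j = 1 then DihedralGroup.r κ else 1) *
      (if y.j = 0 then x.d else psi n α β x.d) * y.d⟩

def qinv (x : QG n) : QG n :=
  ⟨x.j, if x.j = 0 then x.d⁻¹ else psi n α β x.d⁻¹ * (DihedralGroup.r κ)⁻¹⟩

lemma zmod2_cases : ∀ j : ZMod 2, j = 0 ∨ j = 1 := by decide

lemma qmul_00 (d d' : DihedralGroup n) :
    qmul n α β κ ⟨0, d⟩ ⟨0, d'⟩ = ⟨0, d * d'⟩ := by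
  simp [qmul]

lemma qmul_01 (d d' : DihedralGroup n) :
    qmul n α β κ ⟨0, d⟩ ⟨1, d'⟩ = ⟨1, psi n α β d * d'⟩ := by
  simp [qmul, show ¬((1:ZMod 2) = 0) by decide]

lemma qmul_10 (d d' : DihedralGroup n) :
    qmul n α β κ ⟨1, d⟩ ⟨0, d'⟩ = ⟨1, d * d'⟩ := by
  simp [qmul]

lemma qmul_11 (d d' : DihedralGroup n) :
    qmul n α β κ ⟨1, d⟩ ⟨1, d'⟩ = ⟨0, DihedralGroup.r κ * psi n α β d * d'⟩ := by
  simp [qmul, show ((1:ZMod 2)+1 = 0) by decide, show ¬((1:ZMod 2) = 0) by decide, mul_assoc]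

variable (hb : β * β = 1) (hk : κ * β = κ) (h2 : α * (1 + β) = 2 * κ)

include hk in
lemma psi_kappa : psi n α β (.r κ) = .r κ := by
  rw [psi_r]
  congr 1
  rw [mul_comm]
  exact hk

include hb h2 in
lemma psi_psi (d : DihedralGroup n) :
    psi n α β (psi n α β d) = (DihedralGroup.r κ)⁻¹ * d * DihedralGroup.r κ := by
  rcases d with i | i
  · rw [psi_r, psi_r, r_inv, r_mul_r, r_mul_r]
    congr 1
    linear_combination i * hb
  · rw [psi_sr, psi_sr, r_inv, r_mul_sr, sr_mul_r]
    congr 1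
    linear_combination h2 + i * hb

include hb hk h2 in
lemma qmul_assoc (x y z : QG n) :
    qmul n α β κ (qmul n α β κ x y) z = qmul n α β κ x (qmul n α β κ y z) := by
  obtain ⟨j₁, d₁⟩ := x; obtain ⟨j₂, d₂⟩ := y; obtain ⟨j₃, d₃⟩ := z
  have hpk := psi_kappa n α β κ hk
  have hpp := psi_psi n α β κ hb h2
  rcases zmod2_cases j₁ with rfl | rfl <;> rcases zmod2_cases j₂ with rfl | rfl <;>
      rcases zmod2_cases j₃ with rfl | rfl <;>
    simp only [qmul_00, qmul_01, qmul_10, qmul_11, QG.mk.injEq, map_mul, hpk, hpp,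
      true_and] <;>
    group

def qGroup : Group (QG n) where
  mul := qmul n α β κ
  one := ⟨0, 1⟩
  inv := qinv n α β κ
  mul_assoc := qmul_assoc n α β κ hb hk h2
  one_mul := by
    rintro ⟨j, d⟩
    show qmul n α β κ ⟨0, 1⟩ ⟨j, d⟩ = ⟨j, d⟩
    rcases zmod2_cases j with rfl | rfl
    · rw [qmul_00, one_mul]
    · rw [qmul_01, map_one, one_mul]
  mul_one := by
    rintro ⟨j, d⟩
    show qmul n α β κ ⟨j, d⟩ ⟨0, 1⟩ = ⟨j, d⟩
    rcases zmod2_cases j with rfl | rfl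
    · rw [qmul_00, mul_one]
    · rw [qmul_10, mul_one]
  inv_mul_cancel := by
    rintro ⟨j, d⟩
    show qmul n α β κ (qinv n α β κ ⟨j, d⟩) ⟨j, d⟩ = ⟨0, 1⟩
    have hpk := psi_kappa n α β κ hk
    have hpp := psi_psi n α β κ hb h2
    rcases zmod2_cases j with rfl | rfl
    · show qmul n α β κ ⟨0, if (0:ZMod 2) = 0 then d⁻¹ else _⟩ ⟨0, d⟩ = ⟨0, 1⟩
      rw [if_pos rfl, qmul_00, inv_mul_cancel]
    · show qmul n α β κ ⟨1, if (1:ZMod 2) = 0 then d⁻¹ else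
        psi n α β d⁻¹ * (DihedralGroup.r κ)⁻¹⟩ ⟨1, d⟩ = ⟨0, 1⟩
      rw [if_neg (by decide), qmul_11]
      congr 1
      simp only [map_mul, map_inv, hpp, hpk]
      group

end Construction


lemma realizes (n : ℕ) (a b k : ℤ)
    (hb : (b : ZMod n) * (b : ZMod n) = 1) (hk : (k : ZMod n) * (b : ZMod n) = (k : ZMod n))
    (h2 : (a : ZMod n) * (1 + (b : ZMod n)) = 2 * (k : ZMod n)) :
    ∃ (G : Type) (instG : Group G), @RealizesConj n a b G instG := by
  set α := (a : ZMod n) with hα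
  set β := (b : ZMod n) with hβ
  set κ := (k : ZMod n) with hκ
  letI instG : Group (QG n) := qGroup n α β κ hb hk h2
  refine ⟨QG n, instG, ?_⟩
  let ι : DihedralGroup n →* QG n :=
    { toFun := fun d => ⟨0, d⟩
      map_one' := rfl
      map_mul' := fun d d' => (qmul_00 n α β κ d d').symm }
  have hmem : ∀ x : QG n, x ∈ ι.range ↔ x.j = 0 := by
    intro x
    constructor
    · rintro ⟨d', rfl⟩; rfl
    · intro hj
      refine ⟨x.d, ?_⟩
      obtain ⟨j, d⟩ := x
      have hj' : j = 0 := hj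
      show (⟨0, d⟩ : QG n) = ⟨j, d⟩
      rw [hj']
  have hjmul : ∀ x y : QG n, (x * y).j = x.j + y.j := fun _ _ => rfl
  have hjinv : ∀ x : QG n, (x⁻¹).j = x.j := fun _ => rfl
  have hqinv : (⟨1, 1⟩ : QG n)⁻¹ = ⟨1, (DihedralGroup.r κ)⁻¹⟩ := by
    show qinv n α β κ ⟨1, 1⟩ = _
    simp [qinv, show ¬((1 : ZMod 2) = 0) by decide]
  refine ⟨ι, ⟨1, 1⟩, fun d d' hdd' => congrArg QG.d hdd', ?_, ?_, ?_, ?_, ?_⟩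
  · refine ⟨fun x hx g => ?_⟩
    rw [hmem] at hx ⊢
    rw [hjmul, hjmul, hjinv, hx]
    revert g
    have : ∀ t : ZMod 2, t + 0 + t = 0 := by decide
    exact fun g => this g.j
  · refine Subgroup.index_eq_two_iff.mpr ⟨⟨1, 1⟩, fun x => ?_⟩
    rw [hmem, hmem, hjmul]
    show Xor' (x.j + 1 = 0) (x.j = 0)
    have : ∀ t : ZMod 2, Xor' (t + 1 = 0) (t = 0) := by unfold Xor'; decide
    exact this x.j
  · rw [hmem]
    exact (by decide : ¬((1 : ZMod 2) = 0))
  · rw [hqinv]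
    show qmul n α β κ (qmul n α β κ ⟨1, (DihedralGroup.r κ)⁻¹⟩ ⟨0, DihedralGroup.r 1⟩)
      ⟨1, 1⟩ = ⟨0, DihedralGroup.r β⟩
    rw [qmul_10, qmul_11, mul_one]
    congr 1
    rw [map_mul, map_inv, psi_kappa n α β κ hk, psi_r, mul_one, mul_inv_cancel_left]
  · rw [hqinv]
    show qmul n α β κ (qmul n α β κ ⟨1, (DihedralGroup.r κ)⁻¹⟩ ⟨0, DihedralGroup.sr 0⟩)
      ⟨1, 1⟩ = ⟨0, DihedralGroup.sr α⟩
    rw [qmul_10, qmul_11, mul_one]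
    congr 1
    rw [map_mul, map_inv, psi_kappa n α β κ hk, psi_sr, mul_zero, add_zero,
      mul_inv_cancel_left]

lemma r_one_zpow' (n : ℕ) (z : ℤ) : (r 1 : DihedralGroup n) ^ z = r (z : ZMod n) := by
  cases z with
  | ofNat m => simpa using r_one_pow (n := n) m
  | negSucc m =>
    rw [zpow_negSucc, r_one_pow, r_inv]
    congr 1
    push_cast
    ring

lemma forward (n : ℕ) (hn : 2 < n) (a b c : ℤ) (h : b ^ 2 - 1 = (n : ℤ) * c)
    (G : Type) (instG : Group G) (hR : @RealizesConj n a b G instG) :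
    ∃ k : ℤ, (n : ℤ) ∣ (a * (1 + b) - 2 * k) ∧ (n : ℤ) ∣ (k * (b - 1)) := by
  obtain ⟨ι, q, hinj, hnorm, hidx, hq, h1, h2⟩ := hR
  haveI := hnorm
  -- conjugation of powers of r 1 by q
  have hconj : ∀ z : ℤ, q⁻¹ * ι (DihedralGroup.r (z : ZMod n)) * q
      = ι (DihedralGroup.r ((b * z : ℤ) : ZMod n)) := by
    intro z
    have e : q⁻¹ * ι (DihedralGroup.r 1) ^ z * q = (q⁻¹ * ι (DihedralGroup.r 1) * q) ^ z := by
      have := conj_zpow (i := z) (a := q⁻¹) (b := ι (DihedralGroup.r 1))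
      rw [inv_inv] at this
      rw [this]
    have e2 : (DihedralGroup.r ((b : ℤ) : ZMod n) : DihedralGroup n) ^ z
        = DihedralGroup.r ((b * z : ℤ) : ZMod n) := by
      rw [← r_one_zpow', ← zpow_mul, r_one_zpow']
    have e3 : (DihedralGroup.r ((z : ℤ) : ZMod n) : DihedralGroup n)
        = DihedralGroup.r 1 ^ z := (r_one_zpow' n z).symm
    rw [e3, map_zpow, e, h1, ← map_zpow, e2]
  have hbb : ((b * b : ℤ) : ZMod n) = 1 := by
    have : (b * b : ℤ) = 1 + (n : ℤ) * c := by nlinarith [h]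
    rw [this]
    push_cast
    simp
  -- q^2 lies in the image
  have hq2 : q ^ 2 ∈ ι.range := by
    rw [← hidx]
    exact Subgroup.pow_index_mem ι.range q
  obtain ⟨g, hg⟩ := hq2
  have hgconj : ∀ d : DihedralGroup n,
      q⁻¹ * (q⁻¹ * ι d * q) * q = ι (g⁻¹ * d * g) := by
    intro d
    rw [map_mul, map_mul, map_inv, hg, sq]
    group
  -- g commutes with r 1
  have hcomm : g⁻¹ * DihedralGroup.r 1 * g = DihedralGroup.r 1 := by
    apply hinj
    rw [← hgconj, h1, hconj b, hbb]
  -- hence g is a rotation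
  obtain ⟨x, rfl⟩ : ∃ x : ZMod n, g = DihedralGroup.r x := by
    rcases g with x | x
    · exact ⟨x, rfl⟩
    · exfalso
      rw [show (DihedralGroup.sr x : DihedralGroup n)⁻¹ = DihedralGroup.sr x from rfl,
        sr_mul_r, sr_mul_sr] at hcomm
      have : (x - (x + 1) : ZMod n) = 1 := by
        injection hcomm
      have h20 : ((2 : ℕ) : ZMod n) = 0 := by
        push_cast
        linear_combination -this
      rw [ZMod.natCast_eq_zero_iff] at h20
      exact absurd (Nat.le_of_dvd two_pos h20) (by omega)
  haveI : NeZero n := ⟨by omega⟩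
  refine ⟨(x.val : ℤ), ?_, ?_⟩
  · -- from conjugating sr 0 twice
    have key : q⁻¹ * (q⁻¹ * ι (DihedralGroup.sr 0) * q) * q
        = ι (DihedralGroup.sr ((a + a * b : ℤ) : ZMod n)) := by
      rw [h2]
      have hsra : (DihedralGroup.sr (a : ZMod n) : DihedralGroup n)
          = DihedralGroup.r ((-a : ℤ) : ZMod n) * DihedralGroup.sr 0 := by
        rw [r_mul_sr]
        congr 1
        push_cast
        ring
      rw [hsra, map_mul, show q⁻¹ * (ι (DihedralGroup.r ((-a : ℤ) : ZMod n)) * ι (DihedralGroup.sr 0)) * q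
          = (q⁻¹ * ι (DihedralGroup.r ((-a : ℤ) : ZMod n)) * q) * (q⁻¹ * ι (DihedralGroup.sr 0) * q) by group,
        hconj (-a), h2, ← map_mul, r_mul_sr]
      congr 2
      push_cast
      ring
    rw [hgconj] at key
    have : ((DihedralGroup.r x)⁻¹ * DihedralGroup.sr 0 * DihedralGroup.r x : DihedralGroup n)
        = DihedralGroup.sr (x + x) := by
      rw [r_inv, r_mul_sr, sr_mul_r]
      congr 1
      ring
    rw [this] at key
    have hxx : (x + x : ZMod n) = ((a + a * b : ℤ) : ZMod n) := by
      have := hinj key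
      injection this
    have : ((a * (1 + b) - 2 * (x.val : ℤ) : ℤ) : ZMod n) = 0 := by
      push_cast
      rw [ZMod.natCast_val, ZMod.cast_id]
      push_cast at hxx
      linear_combination -hxx
    rwa [ZMod.intCast_zmod_eq_zero_iff_dvd] at this
  · -- q fixes q^2 under conjugation
    have key : q⁻¹ * ι (DihedralGroup.r x) * q = ι (DihedralGroup.r x) := by
      rw [hg]
      group
    have hxval : ((x.val : ℤ) : ZMod n) = x := by
      push_cast
      rw [ZMod.natCast_val, ZMod.cast_id]
    rw [← hxval, hconj] at key
    have : ((b * (x.val : ℤ) : ℤ) : ZMod n) = (((x.val : ℤ)) : ZMod n) := by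
      have := hinj key
      injection this
    have h0 : (((x.val : ℤ) * (b - 1) : ℤ) : ZMod n) = 0 := by
      push_cast at this ⊢
      linear_combination this
    rwa [ZMod.intCast_zmod_eq_zero_iff_dvd] at h0

end DihedralExtAux

/-- Let `n > 2` be even and `a, b, c` integers with `b² − 1 = n·c`.  An extension
`1 → D_n → G → ℤ/2 → 1` in which an element `q` outside `D_n` conjugates `s` to `s^b`
and `t` to `s^a t` exists if and only if `a` and `c` are not both odd. -/
theorem dihedral_extension_obstruction
    (n : ℕ) (hn : 2 < n) (hne : Even n) (a b c : ℤ) (h : b ^ 2 - 1 = (n : ℤ) * c) :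
    (∃ (G : Type) (instG : Group G), @RealizesConj n a b G instG) ↔ ¬(Odd a ∧ Odd c) := by
  rw [← DihedralExtAux.key_arith n hn hne a b c h]
  constructor
  · rintro ⟨G, instG, hR⟩
    exact DihedralExtAux.forward n hn a b c h G instG hR
  · rintro ⟨k, hd1, hd2⟩
    have hb : (b : ZMod n) * (b : ZMod n) = 1 := by
      have : ((b * b - 1 : ℤ) : ZMod n) = 0 := by
        have e : (b * b - 1 : ℤ) = (n : ℤ) * c := by nlinarith [h]
        rw [e]
        push_cast
        simp
      push_cast at this
      linear_combination this
    have hk : (k : ZMod n) * (b : ZMod n) = (k : ZMod n) := by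
      have : ((k * (b - 1) : ℤ) : ZMod n) = 0 := by
        rw [ZMod.intCast_zmod_eq_zero_iff_dvd]
        exact hd2
      push_cast at this
      linear_combination this
    have h2 : (a : ZMod n) * (1 + (b : ZMod n)) = 2 * (k : ZMod n) := by
      have : ((a * (1 + b) - 2 * k : ℤ) : ZMod n) = 0 := by
        rw [ZMod.intCast_zmod_eq_zero_iff_dvd]
        exact hd1
      push_cast at this
      linear_combination this
    exact DihedralExtAux.realizes n a b k hb hk h2
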